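/- arXiv:2303.04934 — 3 statements merged into one kernel-verified Lean document; each statement's English description precedes it below -/
import Mathlib

section
/- Suppose each insertion into a chunk of size m is independently sampled with probability p = σ/(αm), where σ ≥ 1 and 0 < α ≤ 1 with σ/(αm) ≤ 1. If at most αm/2 elements have been inserted into the chunk, then the probability that the sample counter has reached σ (i.e., at least σ insertions were sampled) is at most exp(−σ/8). -/
/-!
Chernoff bound with parameter `t = log 2`: the count `X` of sampled insertions satisfies
`𝔼[2 ^ X] = (1 + p) ^ n ≤ exp (n p) ≤ exp (σ / 2)`, so Markov's inequality gives
`P[X ≥ σ] ≤ exp (σ / 2) / 2 ^ σ = exp (-(log 2 - 1 / 2) σ)`, and `log 2 - 1 / 2 > 1 / 8`.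
-/

open MeasureTheory ProbabilityTheory Real

open scoped NNReal

set_option linter.deprecated false

section PiBernoulli

variable {ι : Type*} [Fintype ι] (q : ℝ≥0) (hq : q ≤ 1)

lemma integral_exp_mul_bernoulli (t : ℝ) :
    ∫ b, exp (t * if b = true then 1 else 0) ∂(PMF.bernoulli q hq).toMeasure
      = 1 - q + q * exp t := by
  simp [PMF.integral_eq_sum, PMF.bernoulli_apply, NNReal.coe_sub hq]
  ring

lemma mgf_card_pi_bernoulli (t : ℝ) :
    mgf (fun ω : ι → Bool => ((Finset.univ.filter fun i => ω i = true).card : ℝ))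
      (Measure.pi fun _ => (PMF.bernoulli q hq).toMeasure) t
      = (1 - q + q * exp t) ^ Fintype.card ι := by
  rw [mgf, ← integral_exp_mul_bernoulli q hq, ← integral_fintype_prod_eq_pow]
  congr with ω
  rw [← exp_sum, ← Finset.mul_sum]
  simp [Finset.sum_boole]

lemma mgf_card_pi_bernoulli_le (t : ℝ) :
    mgf (fun ω : ι → Bool => ((Finset.univ.filter fun i => ω i = true).card : ℝ))
      (Measure.pi fun _ => (PMF.bernoulli q hq).toMeasure) t
      ≤ exp (Fintype.card ι * q * (exp t - 1)) := by
  rw [mgf_card_pi_bernoulli, mul_assoc, exp_nat_mul]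
  gcongr
  · nlinarith [exp_pos t, q.2]
  · linarith [add_one_le_exp (q * (exp t - 1))]

lemma measure_ge_card_pi_bernoulli_le (σ : ℝ) {t : ℝ} (ht : 0 ≤ t) :
    (Measure.pi fun _ : ι => (PMF.bernoulli q hq).toMeasure)
      {ω | σ ≤ ((Finset.univ.filter fun i => ω i = true).card : ℝ)}
      ≤ ENNReal.ofReal (exp (-t * σ + Fintype.card ι * q * (exp t - 1))) := by
  rw [← ofReal_measureReal, exp_add]
  gcongr
  calc _ ≤ _ := measure_ge_le_exp_mul_mgf σ ht .of_finite
    _ ≤ _ := by gcongr; exact mgf_card_pi_bernoulli_le q hq t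

end PiBernoulli

/-- Chernoff upper-tail bound for the hash bag sampling counter: with `n`
independent insertions into a chunk of size `m`, each sampled with probability
`p = σ/(αm) ≤ 1`, if `n ≤ αm/2` then the probability that at least `σ`
insertions were sampled is at most `exp(−σ/8)`. -/
theorem hashbag_premature_resize_prob (σ α : ℝ) (m n : ℕ)
    (hσ : 1 ≤ σ) (hα : 0 < α) (hm : 0 < m)
    (p : ENNReal) (hp : p = ENNReal.ofReal (σ / (α * m))) (hp1 : p ≤ 1)
    (hn : (n : ℝ) ≤ α * m / 2) :
    (Measure.pi fun _ : Fin n => (PMF.bernoulli p.toNNReal (by simpa using ENNReal.toNNReal_mono ENNReal.one_ne_top hp1)).toMeasure)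
      {ω | σ ≤ ((Finset.univ.filter fun i => ω i = true).card : ℝ)}
      ≤ ENNReal.ofReal (Real.exp (-σ / 8)) := by
  have hαm : 0 < α * m := by positivity
  have hp_real : (p.toNNReal : ℝ) = σ / (α * m) := by
    rw [ENNReal.coe_toNNReal_eq_toReal, hp, ENNReal.toReal_ofReal (by positivity)]
  have hmean : n * (σ / (α * m)) ≤ σ / 2 := by
    rw [mul_div_assoc', div_le_div_iff₀ hαm two_pos]
    nlinarith
  refine (measure_ge_card_pi_bernoulli_le _ _ σ (log_nonneg one_le_two)).trans ?_
  rw [Fintype.card_fin, exp_log two_pos, hp_real]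
  gcongr
  nlinarith [log_two_gt_d9]
end

section
/- If the sample threshold is σ = c·log n for a constant c ≥ 8, then over all at most log₂(n/λ) + 1 chunks used during the hash bag's lifetime, the probability that any chunk resizes while less than half-expected-full, or fails to resize after twice-expected-full, is at most 2(log₂ n + 1)·n^{−c/8}, which is at most 1/n for c ≥ 16 and n sufficiently large. -/
/-!
Each of the `K` chunks contributes two bad events, both of probability at most
`exp (-σ / 8) = n ^ (-c / 8)`, so the union bound gives `2 K n ^ (-c / 8)`, and
`K ≤ log₂ (n / λ) + 1 ≤ log₂ n + 1`. For `c ≥ 16` the factor `n ^ (-c / 8)` is at most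
`n⁻²`, while `2 (log₂ n + 1) ≤ n` once `n ≥ 49` because `log n ≤ 2 √n`.
-/

open MeasureTheory Real

lemma measure_biUnion_union_le_card_mul {ι Ω : Type*} [MeasurableSpace Ω] (μ : Measure Ω)
    (s : Finset ι) (A B : ι → Set Ω) {a b : ENNReal}
    (hA : ∀ i, μ (A i) ≤ a) (hB : ∀ i, μ (B i) ≤ b) :
    μ (⋃ i ∈ s, A i ∪ B i) ≤ s.card * (a + b) :=
  calc μ (⋃ i ∈ s, A i ∪ B i)
      ≤ ∑ i ∈ s, μ (A i ∪ B i) := measure_biUnion_finset_le _ _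
    _ ≤ ∑ _i ∈ s, (a + b) :=
        Finset.sum_le_sum fun i _ => (measure_union_le _ _).trans (add_le_add (hA i) (hB i))
    _ = s.card * (a + b) := by rw [Finset.sum_const, nsmul_eq_mul]

lemma logb_div_le_logb {b x y : ℝ} (hb : 1 < b) (hx : 0 < x) (hy : 1 ≤ y) :
    logb b (x / y) ≤ logb b x :=
  logb_le_logb_of_le hb (by positivity) (div_le_self hx.le hy)

lemma exp_neg_mul_log_div_eq_rpow {x : ℝ} (hx : 0 < x) (c d : ℝ) :
    exp (-(c * log x) / d) = x ^ (-c / d) := by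
  rw [rpow_def_of_pos hx]
  ring_nf

lemma logb_two_le_three_mul_sqrt {x : ℝ} (hx : 0 ≤ x) : logb 2 x ≤ 3 * √x := by
  have hlog : log x ≤ 2 * √x := by
    simpa [sqrt_eq_rpow, div_eq_mul_inv, mul_comm] using log_le_rpow_div hx one_half_pos
  have hlog2 : 2 / 3 < log 2 := by linarith [log_two_gt_d9]
  rw [logb, div_le_iff₀ (by linarith)]
  nlinarith [sqrt_nonneg x]

lemma two_mul_logb_two_add_one_le_self {x : ℝ} (hx : 49 ≤ x) : 2 * (logb 2 x + 1) ≤ x := by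
  have hsqrt : 7 ≤ √x := by
    rw [show (7 : ℝ) = √49 by rw [show (49 : ℝ) = 7 ^ 2 by norm_num, sqrt_sq (by norm_num)]]
    exact sqrt_le_sqrt hx
  have hsq : √x * √x = x := mul_self_sqrt (by linarith)
  nlinarith [logb_two_le_three_mul_sqrt (x := x) (by linarith)]

lemma rpow_neg_le_inv_sq {x c : ℝ} (hx : 1 ≤ x) (hc : 16 ≤ c) : x ^ (-c / 8) ≤ (x ^ 2)⁻¹ :=
  calc x ^ (-c / 8) ≤ x ^ (-2 : ℝ) := rpow_le_rpow_of_exponent_le hx (by linarith)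
    _ = (x ^ 2)⁻¹ := by rw [rpow_neg (by linarith), rpow_two]

lemma two_mul_logb_two_add_one_mul_rpow_le_inv {x c : ℝ} (hx : 49 ≤ x) (hc : 16 ≤ c) :
    2 * (logb 2 x + 1) * x ^ (-c / 8) ≤ 1 / x := by
  have hx0 : 0 < x := by linarith
  calc 2 * (logb 2 x + 1) * x ^ (-c / 8) ≤ x * (x ^ 2)⁻¹ :=
        mul_le_mul (two_mul_logb_two_add_one_le_self hx) (rpow_neg_le_inv_sq (by linarith) hc)
          (by positivity) hx0.le
    _ = 1 / x := by field_simp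

theorem hashbag_union_bound_general {Ω : Type*} [MeasurableSpace Ω]
    (μ : Measure Ω)
    (n lam : ℕ) (hn : 2 ≤ n) (hlam : 1 ≤ lam)
    (c σ : ℝ) (hc : 8 ≤ c) (hσ : σ = c * Real.log n)
    (K : ℕ) (hK : (K : ℝ) ≤ Real.logb 2 ((n : ℝ) / lam) + 1)
    (A B : ℕ → Set Ω)
    (hA : ∀ i, μ (A i) ≤ ENNReal.ofReal (Real.exp (-σ / 8)))
    (hB : ∀ i, μ (B i) ≤ ENNReal.ofReal (Real.exp (-σ / 4))) :
    μ (⋃ i ∈ Finset.range K, A i ∪ B i)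
      ≤ ENNReal.ofReal (2 * (Real.logb 2 n + 1) * (n : ℝ) ^ (-c / 8)) ∧
    (16 ≤ c → ∃ N : ℕ, ∀ n' : ℕ, N ≤ n' →
      2 * (Real.logb 2 n' + 1) * (n' : ℝ) ^ (-c / 8) ≤ 1 / n') := by
  have hn0 : (0 : ℝ) < n := by positivity
  have hσ0 : 0 ≤ σ :=
    hσ ▸ mul_nonneg (by linarith) (log_nonneg (Nat.one_le_cast.2 (by omega)))
  have hKn : (K : ℝ) ≤ logb 2 n + 1 :=
    hK.trans (add_le_add_left (logb_div_le_logb one_lt_two hn0 (Nat.one_le_cast.2 hlam)) 1)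
  have hB' : ∀ i, μ (B i) ≤ ENNReal.ofReal (exp (-σ / 8)) := fun i =>
    (hB i).trans (ENNReal.ofReal_le_ofReal (exp_le_exp.2 (by linarith)))
  refine ⟨?_, fun hc16 => ⟨49, fun m hm => two_mul_logb_two_add_one_mul_rpow_le_inv
    (by exact_mod_cast hm) hc16⟩⟩
  calc μ (⋃ i ∈ Finset.range K, A i ∪ B i)
      ≤ K * (ENNReal.ofReal (exp (-σ / 8)) + ENNReal.ofReal (exp (-σ / 8))) := by
        simpa using measure_biUnion_union_le_card_mul μ (Finset.range K) A B hA hB'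
    _ = ENNReal.ofReal (2 * K * exp (-σ / 8)) := by
        rw [← two_mul, ← ENNReal.ofReal_natCast, ← ENNReal.ofReal_ofNat 2,
          ← ENNReal.ofReal_mul (by norm_num), ← ENNReal.ofReal_mul (by positivity)]
        ring_nf
    _ ≤ ENNReal.ofReal (2 * (logb 2 n + 1) * (n : ℝ) ^ (-c / 8)) := by
        rw [hσ, exp_neg_mul_log_div_eq_rpow hn0]
        gcongr

/-- Union bound over chunks: with sample threshold `σ = c·log n`, `c ≥ 8`,
and at most `K ≤ log₂(n/λ) + 1` chunks, each chunk resizing prematurely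
(event `A i`, probability ≤ `exp(−σ/8)`) or failing to resize in time
(event `B i`, probability ≤ `exp(−σ/4)`), the probability that any bad event
occurs is at most `2(log₂ n + 1)·n^(−c/8)`; moreover for `c ≥ 16` this bound
is at most `1/n` for all sufficiently large `n`. -/
theorem hashbag_union_bound {Ω : Type*} [MeasurableSpace Ω]
    (μ : Measure Ω) [IsProbabilityMeasure μ]
    (n lam : ℕ) (hn : 2 ≤ n) (hlam : 1 ≤ lam) (hlamn : lam ≤ n)
    (c σ : ℝ) (hc : 8 ≤ c) (hσ : σ = c * Real.log n)
    (K : ℕ) (hK : (K : ℝ) ≤ Real.logb 2 ((n : ℝ) / lam) + 1)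
    (A B : ℕ → Set Ω)
    (hA : ∀ i, μ (A i) ≤ ENNReal.ofReal (Real.exp (-σ / 8)))
    (hB : ∀ i, μ (B i) ≤ ENNReal.ofReal (Real.exp (-σ / 4))) :
    μ (⋃ i ∈ Finset.range K, A i ∪ B i)
      ≤ ENNReal.ofReal (2 * (Real.logb 2 n + 1) * (n : ℝ) ^ (-c / 8)) ∧
    (16 ≤ c → ∃ N : ℕ, ∀ n' : ℕ, N ≤ n' →
      2 * (Real.logb 2 n' + 1) * (n' : ℝ) ^ (-c / 8) ≤ 1 / n') :=
  hashbag_union_bound_general μ n lam hn hlam c σ hc hσ K hK A B hA hB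
end

section
/- If the first chunk size satisfies λ ≥ c(P + log n)·log n and each of at most log₂ n chunks can overfill by at most O(P) insertions past its trigger point (due to concurrency delay) plus sampling error bounded with probability 1 − 1/n, then with probability at least 1 − 2/n, every chunk's occupancy never exceeds a constant fraction (say 3α/4 + o(1) < 1 for α < 1) of its size throughout the execution; hence every random probe succeeds with constant probability. -/
open MeasureTheory

/-- Bounded occupancy with high probability. Suppose the first chunk size
satisfies `λ ≥ c(P + log n)·log n`, there are `K ≤ log₂ n` chunks of sizes
`2^i·λ`, and on a good event `A` of probability at least `1 − 1/n` (the
sampling estimates are accurate) the maximum occupancy of every chunk `i`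
is at most `(3α/4)·2^i·λ + C·P` (the `C·P` term accounting for insertions
between the resize trigger and the resize, by loose synchrony, with `C ≤ c`).
Then with probability at least `1 − 2/n`, every chunk's occupancy never
exceeds the fraction `3α/4 + 1/log n = 3α/4 + o(1)` of its size. -/
theorem hashbag_occupancy_whp {Ω : Type*} [MeasurableSpace Ω]
    (μ : Measure Ω) [IsProbabilityMeasure μ]
    (n P K : ℕ) (lam α c C : ℝ)
    (hn : 3 ≤ n) (hP : 1 ≤ P) (hα : 0 < α) (hα1 : α < 1)
    (hc : 0 < c) (hC : 0 < C) (hCc : C ≤ c)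
    (hlam : c * ((P : ℝ) + Real.log n) * Real.log n ≤ lam)
    (hK : (K : ℝ) ≤ Real.logb 2 n)
    (occupancy : ℕ → Ω → ℝ)
    (A : Set Ω) (hA : (1 : ENNReal) - 1 / (n : ENNReal) ≤ μ A)
    (hocc : ∀ ω ∈ A, ∀ i < K,
      occupancy i ω ≤ 3 * α / 4 * (2 ^ i * lam) + C * P) :
    (1 : ENNReal) - 2 / (n : ENNReal) ≤
      μ {ω | ∀ i < K,
        occupancy i ω ≤ (3 * α / 4 + 1 / Real.log n) * (2 ^ i * lam)} := by
  have hlogn : (1 : ℝ) < Real.log n := by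
    have : Real.exp 1 < n := by
      have : Real.exp 1 < 3 := by
        have := Real.exp_one_lt_d9; linarith
      have h3 : (3 : ℝ) ≤ n := by exact_mod_cast hn
      linarith
    calc (1 : ℝ) = Real.log (Real.exp 1) := (Real.log_exp 1).symm
      _ < Real.log n := Real.log_lt_log (Real.exp_pos 1) this
  have hlogpos : (0 : ℝ) < Real.log n := by linarith
  have hP1 : (1 : ℝ) ≤ (P : ℝ) := by exact_mod_cast hP
  have hCP : C * P * Real.log n ≤ lam := by
    have h1 : C * P * Real.log n ≤ c * P * Real.log n := by
      have : C * (P * Real.log n) ≤ c * (P * Real.log n) := by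
        apply mul_le_mul_of_nonneg_right hCc
        positivity
      linarith [this]
    have h2 : c * P * Real.log n ≤ c * ((P : ℝ) + Real.log n) * Real.log n := by
      have : c * (P : ℝ) ≤ c * ((P : ℝ) + Real.log n) := by nlinarith
      apply mul_le_mul_of_nonneg_right this hlogpos.le
    linarith
  have hlampos : 0 < lam := by nlinarith [mul_pos (mul_pos hc (by linarith : (0:ℝ) < (P:ℝ) + Real.log n)) hlogpos]
  have hsub : A ⊆ {ω | ∀ i < K,
      occupancy i ω ≤ (3 * α / 4 + 1 / Real.log n) * (2 ^ i * lam)} := by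
    intro ω hω
    intro i hi
    have h := hocc ω hω i hi
    have hpow : (1 : ℝ) ≤ 2 ^ i := one_le_pow₀ (by norm_num)
    have key : C * P ≤ 1 / Real.log n * (2 ^ i * lam) := by
      have h1 : C * P ≤ lam / Real.log n := by
        rw [le_div_iff₀ hlogpos]; linarith
      have h2 : lam / Real.log n ≤ 1 / Real.log n * (2 ^ i * lam) := by
        rw [div_eq_mul_inv, one_div]
        have : lam ≤ 2 ^ i * lam := le_mul_of_one_le_left hlampos.le hpow
        nlinarith [inv_pos.mpr hlogpos]
      linarith
    calc occupancy i ω ≤ 3 * α / 4 * (2 ^ i * lam) + C * P := h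
      _ ≤ 3 * α / 4 * (2 ^ i * lam) + 1 / Real.log n * (2 ^ i * lam) := by linarith
      _ = (3 * α / 4 + 1 / Real.log n) * (2 ^ i * lam) := by ring
  calc (1 : ENNReal) - 2 / (n : ENNReal) ≤ 1 - 1 / (n : ENNReal) := by
        apply tsub_le_tsub_left
        apply ENNReal.div_le_div_right
        exact one_le_two
    _ ≤ μ A := hA
    _ ≤ _ := measure_mono hsub
end
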